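/- arXiv:1708.01376 — 14 statements merged into one kernel-verified Lean document; each statement's English description precedes it below -/
import Mathlib

section
/- Let F be an algebraically closed field with char F ≠ 2, 3, and let A be the 2-dimensional algebra with basis e1, e2 and multiplication e1·e1 = α1·e1 + β1·e2, e1·e2 = α2·e1 − α1·e2, e2·e1 = (α2+1)·e1 + (1−α1)·e2, e2·e2 = α4·e1 − α2·e2 (for arbitrary parameters α1, α2, α4, β1 ∈ F). Then the only algebra automorphism of A is the identity map. -/
/-- Bilinear multiplication on `Fin 2 → F` determined by the four products
`e1·e1 = p11`, `e1·e2 = p12`, `e2·e1 = p21`, `e2·e2 = p22` of basis vectors. -/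
def mul2 {F : Type*} [Field F] (p11 p12 p21 p22 : Fin 2 → F) (u v : Fin 2 → F) : Fin 2 → F :=
  (u 0 * v 0) • p11 + (u 0 * v 1) • p12 + (u 1 * v 0) • p21 + (u 1 * v 1) • p22

theorem stmt0 {F : Type*} [Field F] [IsAlgClosed F]
    (h2 : (2 : F) ≠ 0) (h3 : (3 : F) ≠ 0) (α1 α2 α4 β1 : F)
    (mul : (Fin 2 → F) → (Fin 2 → F) → (Fin 2 → F))
    (hmul : mul = mul2 ![α1, β1] ![α2, -α1] ![α2 + 1, 1 - α1] ![α4, -α2])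
    (f : (Fin 2 → F) ≃ₗ[F] (Fin 2 → F))
    (hf : ∀ u v, f (mul u v) = mul (f u) (f v)) :
    f = LinearEquiv.refl F (Fin 2 → F) := by
  subst hmul
  set e₁ : Fin 2 → F := ![1,0] with he1
  set e₂ : Fin 2 → F := ![0,1] with he2
  have hdecomp : ∀ v : Fin 2 → F, v = v 0 • e₁ + v 1 • e₂ := by
    intro v; funext i; fin_cases i <;> simp [he1, he2]
  have hrep : ∀ v : Fin 2 → F, f v = v 0 • f e₁ + v 1 • f e₂ := by
    intro v; conv_lhs => rw [hdecomp v]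
    simp
  have hsrep : ∀ v : Fin 2 → F, f.symm v = v 0 • f.symm e₁ + v 1 • f.symm e₂ := by
    intro v; conv_lhs => rw [hdecomp v]
    simp
  have hs1 := hsrep (f e₁)
  have hs2 := hsrep (f e₂)
  rw [f.symm_apply_apply] at hs1 hs2
  have hs10 := congrFun hs1 0
  have hs11 := congrFun hs1 1
  have hs20 := congrFun hs2 0
  have hs21 := congrFun hs2 1
  simp [he1, he2] at hs10 hs11 hs20 hs21
  -- hf instances
  have L11 := hf e₁ (f.symm e₁)
  have L12 := hf e₁ (f.symm e₂)
  have L21 := hf e₂ (f.symm e₁)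
  have L22 := hf e₂ (f.symm e₂)
  rw [f.apply_symm_apply, hrep] at L11 L12 L21 L22
  have R11 := hf (f.symm e₁) e₁
  have R12 := hf (f.symm e₁) e₂
  have R21 := hf (f.symm e₂) e₁
  have R22 := hf (f.symm e₂) e₂
  rw [f.apply_symm_apply, hrep] at R11 R12 R21 R22
  have L110 := congrFun L11 0
  have L121 := congrFun L12 1
  have L210 := congrFun L21 0
  have L221 := congrFun L22 1
  have R110 := congrFun R11 0
  have R121 := congrFun R21 1
  have R210 := congrFun R12 0
  have R221 := congrFun R22 1
  simp [he1, he2, mul2] at L110 L121 L210 L221 R110 R121 R210 R221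
  have hb : f ![1,0] 1 = 0 := by
    linear_combination -L110 - L121 - α1*hs10 - α2*hs11 - β1*hs20 + α1*hs21
  have hd : f ![0,1] 1 = 1 := by
    linear_combination -L210 - L221 - (α2+1)*hs10 - α4*hs11 - (1-α1)*hs20 + α2*hs21
  have ha : f ![1,0] 0 = 1 := by
    linear_combination -R110 - R121 - α1*hs10 - (α2+1)*hs11 - β1*hs20 - (1-α1)*hs21
  have hc : f ![0,1] 0 = 0 := by
    linear_combination -R210 - R221 - α2*hs10 - α4*hs11 + α1*hs20 + α2*hs21
  have hfe1 : f e₁ = e₁ := by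
    funext i; fin_cases i
    · simpa [he1] using ha
    · simpa [he1] using hb
  have hfe2 : f e₂ = e₂ := by
    funext i; fin_cases i
    · simpa [he2] using hc
    · simpa [he2] using hd
  apply LinearEquiv.ext
  intro v
  rw [hrep v]
  rw [hfe1, hfe2, LinearEquiv.refl_apply]
  exact (hdecomp v).symm
end

section
/- Let F be a field with char F ≠ 2, 3, and let A be the 2-dimensional algebra with basis e1, e2 and products e1·e1 = α1·e1 + β1·e2, e1·e2 = β2·e2, e2·e1 = (1−α1)·e2, e2·e2 = e1, where α1, β1, β2 ∈ F. If β1 ≠ 0, then the identity is the only automorphism of A; if β1 = 0, the automorphism group consists exactly of the identity and the linear map sending e1 ↦ e1, e2 ↦ −e2. -/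
section aux
variable {F : Type*} [Field F]

lemma expand2 (f : (Fin 2 → F) →ₗ[F] (Fin 2 → F)) (x : Fin 2 → F) :
    f x = x 0 • f ![1,0] + x 1 • f ![0,1] := by
  have hx : x = x 0 • ![1,0] + x 1 • ![0,1] := by
    funext i; fin_cases i <;> simp
  conv_lhs => rw [hx]
  rw [map_add, map_smul, map_smul]

lemma expand2e (f : (Fin 2 → F) ≃ₗ[F] (Fin 2 → F)) (x : Fin 2 → F) :
    f x = x 0 • f ![1,0] + x 1 • f ![0,1] := expand2 (f : (Fin 2 → F) →ₗ[F] (Fin 2 → F)) x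

lemma det_ne (f : (Fin 2 → F) ≃ₗ[F] (Fin 2 → F)) :
    f ![1,0] 0 * f ![0,1] 1 - f ![1,0] 1 * f ![0,1] 0 ≠ 0 := by
  intro h0
  have k1 : f ((f ![0,1] 1) • ![1,0] - (f ![1,0] 1) • ![0,1]) = 0 := by
    rw [map_sub, map_smul, map_smul]
    funext i; fin_cases i <;> simp <;> ring_nf <;> linear_combination h0
  have k1' := f.map_eq_zero_iff.mp k1
  have hd : f ![0,1] 1 = 0 := by
    have := congrFun k1' 0; simpa using this
  have hb : f ![1,0] 1 = 0 := by
    have := congrFun k1' 1; simpa using this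
  have k2 : f ((f ![0,1] 0) • ![1,0] - (f ![1,0] 0) • ![0,1]) = 0 := by
    rw [map_sub, map_smul, map_smul]
    funext i; fin_cases i <;> simp [hb, hd] <;> ring
  have k2' := f.map_eq_zero_iff.mp k2
  have hc : f ![0,1] 0 = 0 := by
    have := congrFun k2' 0; simpa using this
  have ha : f ![1,0] 0 = 0 := by
    have := congrFun k2' 1; simpa using this
  have : f (![1,0] : Fin 2 → F) = 0 := by
    funext i; fin_cases i <;> simp [ha, hb]
  have := congrFun (f.map_eq_zero_iff.mp this) 0
  simpa using this

lemma solve2 (α1 β1 β2 a b c d : F)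
    (hD : a*d - b*c ≠ 0)
    (h1 : α1*a + β1*c = α1*(a*a) + b*b)
    (h2 : α1*b + β1*d = a*a*β1 + a*b*β2 + a*b*(1-α1))
    (h4 : β2*d = a*c*β1 + a*d*β2 + b*c*(1-α1))
    (h5 : (1-α1)*c = α1*(a*c) + b*d)
    (h6 : (1-α1)*d = a*c*β1 + c*b*β2 + d*a*(1-α1))
    (h7 : a = α1*(c*c) + d*d)
    (h8 : b = c*c*β1 + c*d*β2 + c*d*(1-α1))
    (h3 : β2*c = α1*(a*c) + b*d) :
    a = 1 ∧ b = 0 ∧ c = 0 ∧ d*d = 1 ∧ β1*d = β1 := by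
  have ha : a = 1 := by
    have key : (1-a)*(a*d-b*c) = 0 := by linear_combination d*h1 - b*h5 - c*h2 + a*h6
    rcases mul_eq_zero.mp key with h | h
    · linear_combination -h
    · exact absurd h hD
  have hc : c = 0 := by
    have key : (-c)*(a*d-b*c) = 0 := by linear_combination d*h3 - b*h7 - c*h4 + a*h8
    rcases mul_eq_zero.mp key with h | h
    · linear_combination -h
    · exact absurd h hD
  subst ha; subst hc
  have hb : b = 0 := by linear_combination h8
  subst hb
  exact ⟨rfl, rfl, rfl, by linear_combination -h7, by linear_combination h2⟩

lemma main_eqs (α1 β1 β2 : F) (f : (Fin 2 → F) ≃ₗ[F] (Fin 2 → F))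
    (hf : ∀ u v, f (mul2 ![α1, β1] ![0, β2] ![0, 1 - α1] ![1, 0] u v)
        = mul2 ![α1, β1] ![0, β2] ![0, 1 - α1] ![1, 0] (f u) (f v)) :
    f ![1,0] 0 = 1 ∧ f ![1,0] 1 = 0 ∧ f ![0,1] 0 = 0 ∧
      f ![0,1] 1 * f ![0,1] 1 = 1 ∧ β1 * f ![0,1] 1 = β1 := by
  set a := f ![1,0] 0 with ha'
  set b := f ![1,0] 1 with hb'
  set c := f ![0,1] 0 with hc'
  set d := f ![0,1] 1 with hd'
  have e11 := hf ![1,0] ![1,0]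
  rw [expand2e f (mul2 _ _ _ _ _ _)] at e11
  have e12 := hf ![1,0] ![0,1]
  rw [expand2e f (mul2 _ _ _ _ _ _)] at e12
  have e21 := hf ![0,1] ![1,0]
  rw [expand2e f (mul2 _ _ _ _ _ _)] at e21
  have e22 := hf ![0,1] ![0,1]
  rw [expand2e f (mul2 _ _ _ _ _ _)] at e22
  have q110 := congrFun e11 0
  have q111 := congrFun e11 1
  have q120 := congrFun e12 0
  have q121 := congrFun e12 1
  have q210 := congrFun e21 0
  have q211 := congrFun e21 1
  have q220 := congrFun e22 0
  have q221 := congrFun e22 1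
  simp only [mul2, Pi.add_apply, Pi.smul_apply, smul_eq_mul, Matrix.cons_val_zero,
    Matrix.cons_val_one, Matrix.head_cons, ← ha', ← hb', ← hc', ← hd'] at q110 q111 q120 q121 q210 q211 q220 q221
  exact solve2 α1 β1 β2 a b c d (det_ne f)
    (by linear_combination q110) (by linear_combination q111)
    (by linear_combination q121) (by linear_combination q210)
    (by linear_combination q211) (by linear_combination q220)
    (by linear_combination q221) (by linear_combination q120)

end aux

theorem stmt1 {F : Type*} [Field F] (h2 : (2 : F) ≠ 0) (h3 : (3 : F) ≠ 0) (α1 β1 β2 : F)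
    (mul : (Fin 2 → F) → (Fin 2 → F) → (Fin 2 → F))
    (hmul : mul = mul2 ![α1, β1] ![0, β2] ![0, 1 - α1] ![1, 0]) :
    (β1 ≠ 0 → ∀ f : (Fin 2 → F) ≃ₗ[F] (Fin 2 → F), (∀ u v, f (mul u v) = mul (f u) (f v)) ↔ f = LinearEquiv.refl F (Fin 2 → F)) ∧
    (β1 = 0 → ∀ f : (Fin 2 → F) ≃ₗ[F] (Fin 2 → F), (∀ u v, f (mul u v) = mul (f u) (f v)) ↔
      (f ![1, 0] = ![1, 0] ∧ (f ![0, 1] = ![0, 1] ∨ f ![0, 1] = ![0, -1]))) := by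
  subst hmul
  constructor
  · intro hb1 f
    constructor
    · intro hf
      obtain ⟨HA, HB, HC, HD, HE⟩ := main_eqs α1 β1 β2 f hf
      have hd1 : f ![0,1] 1 = 1 := by
        have := mul_left_cancel₀ hb1 (HE.trans (mul_one β1).symm)
        exact this
      have hfe1 : f ![1,0] = (![1,0] : Fin 2 → F) := by
        funext i; fin_cases i <;> simp [HA, HB]
      have hfe2 : f ![0,1] = (![0,1] : Fin 2 → F) := by
        funext i; fin_cases i <;> simp [HC, hd1]
      apply LinearEquiv.toLinearMap_injective
      apply LinearMap.ext
      intro x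
      rw [LinearEquiv.coe_coe, expand2e f x, hfe1, hfe2]
      funext i; fin_cases i <;> simp
    · rintro rfl u v; simp
  · intro hb1 f
    subst hb1
    constructor
    · intro hf
      obtain ⟨HA, HB, HC, HD, HE⟩ := main_eqs α1 0 β2 f hf
      refine ⟨by funext i; fin_cases i <;> simp [HA, HB], ?_⟩
      have : (f ![0,1] 1 - 1) * (f ![0,1] 1 + 1) = 0 := by linear_combination HD
      rcases mul_eq_zero.mp this with h | h
      · left; funext i; fin_cases i <;> simp [HC] ; linear_combination h
      · right; funext i; fin_cases i <;> simp [HC] ; linear_combination h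
    · rintro ⟨hF1, hF2⟩ u v
      rw [expand2e f (mul2 _ _ _ _ u v), expand2e f u, expand2e f v, hF1]
      rcases hF2 with h | h <;> rw [h] <;>
        · funext i
          fin_cases i <;>
            simp [mul2] <;> ring
end

section
/- Let F be a field with char F ≠ 2, 3, and let A be the 2-dimensional algebra with products e1·e1 = β1·e2, e1·e2 = e1 + β2·e2, e2·e1 = e1 + e2, e2·e2 = −e2, where β1, β2 ∈ F. Then the only automorphism of A is the identity. -/
theorem stmt2 {F : Type*} [Field F] (h2 : (2 : F) ≠ 0) (h3 : (3 : F) ≠ 0) (β1 β2 : F)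
    (mul : (Fin 2 → F) → (Fin 2 → F) → (Fin 2 → F))
    (hmul : mul = mul2 ![0, β1] ![1, β2] ![1, 1] ![0, -1]) :
    ∀ f : (Fin 2 → F) ≃ₗ[F] (Fin 2 → F), (∀ u v, f (mul u v) = mul (f u) (f v)) → f = LinearEquiv.refl F (Fin 2 → F) := by
  subst hmul
  intro f hf
  have m11 : mul2 ![0, β1] ![1, β2] ![1, 1] ![0, -1] ![(1:F),0] ![(1:F),0] = β1 • ![(0:F),1] := by
    funext i; fin_cases i <;> simp [mul2]
  have m12 : mul2 ![0, β1] ![1, β2] ![1, 1] ![0, -1] ![(1:F),0] ![(0:F),1]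
      = ![(1:F),0] + β2 • ![(0:F),1] := by
    funext i; fin_cases i <;> simp [mul2]
  have m21 : mul2 ![0, β1] ![1, β2] ![1, 1] ![0, -1] ![(0:F),1] ![(1:F),0]
      = ![(1:F),0] + ![(0:F),1] := by
    funext i; fin_cases i <;> simp [mul2]
  have m22 : mul2 ![0, β1] ![1, β2] ![1, 1] ![0, -1] ![(0:F),1] ![(0:F),1] = -![(0:F),1] := by
    funext i; fin_cases i <;> simp [mul2]
  obtain ⟨a, ha⟩ : ∃ x, f ![(1:F),0] 0 = x := ⟨_, rfl⟩
  obtain ⟨b, hb⟩ : ∃ x, f ![(1:F),0] 1 = x := ⟨_, rfl⟩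
  obtain ⟨c, hc⟩ : ∃ x, f ![(0:F),1] 0 = x := ⟨_, rfl⟩
  obtain ⟨d, hd⟩ : ∃ x, f ![(0:F),1] 1 = x := ⟨_, rfl⟩
  have H11 := hf ![(1:F),0] ![(1:F),0]
  rw [m11, map_smul] at H11
  have H12 := hf ![(1:F),0] ![(0:F),1]
  rw [m12, map_add, map_smul] at H12
  have H21 := hf ![(0:F),1] ![(1:F),0]
  rw [m21, map_add] at H21
  have H22 := hf ![(0:F),1] ![(0:F),1]
  rw [m22, map_neg] at H22
  have E1 : β1 * c = 2 * (a * b) := by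
    have h := congrFun H11 0
    simp only [mul2, Pi.add_apply, Pi.smul_apply, smul_eq_mul, Matrix.cons_val_zero,
      Matrix.cons_val_one, Matrix.head_cons, mul_zero, mul_one, add_zero, zero_add] at h
    rw [ha, hb, hc] at h
    linear_combination h
  have E2 : β1 * d = β1 * a * a + β2 * a * b + b * a - b * b := by
    have h := congrFun H11 1
    simp only [mul2, Pi.add_apply, Pi.smul_apply, smul_eq_mul, Matrix.cons_val_zero,
      Matrix.cons_val_one, Matrix.head_cons, mul_zero, mul_one, add_zero, zero_add] at h
    rw [ha, hb, hd] at h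
    linear_combination h
  have E3 : a + β2 * c = a * d + b * c := by
    have h := congrFun H12 0
    simp only [mul2, Pi.add_apply, Pi.smul_apply, smul_eq_mul, Matrix.cons_val_zero,
      Matrix.cons_val_one, Matrix.head_cons, mul_zero, mul_one, add_zero, zero_add] at h
    rw [ha, hb, hc, hd] at h
    linear_combination h
  have E4 : b + β2 * d = β1 * a * c + β2 * (a * d) + b * c - b * d := by
    have h := congrFun H12 1
    simp only [mul2, Pi.add_apply, Pi.smul_apply, smul_eq_mul, Matrix.cons_val_zero,
      Matrix.cons_val_one, Matrix.head_cons, mul_zero, mul_one, add_zero, zero_add] at h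
    rw [ha, hb, hc, hd] at h
    linear_combination h
  have E5 : a + c = c * b + d * a := by
    have h := congrFun H21 0
    simp only [mul2, Pi.add_apply, Pi.smul_apply, smul_eq_mul, Matrix.cons_val_zero,
      Matrix.cons_val_one, Matrix.head_cons, mul_zero, mul_one, add_zero, zero_add] at h
    rw [ha, hb, hc, hd] at h
    linear_combination h
  have E6 : b + d = β1 * c * a + β2 * (c * b) + d * a - d * b := by
    have h := congrFun H21 1
    simp only [mul2, Pi.add_apply, Pi.smul_apply, smul_eq_mul, Matrix.cons_val_zero,
      Matrix.cons_val_one, Matrix.head_cons, mul_zero, mul_one, add_zero, zero_add] at h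
    rw [ha, hb, hc, hd] at h
    linear_combination h
  have E7 : -c = 2 * (c * d) := by
    have h := congrFun H22 0
    simp only [mul2, Pi.add_apply, Pi.smul_apply, Pi.neg_apply, smul_eq_mul, Matrix.cons_val_zero,
      Matrix.cons_val_one, Matrix.head_cons, mul_zero, mul_one, add_zero, zero_add] at h
    rw [hc, hd] at h
    linear_combination h
  have E8 : -d = β1 * c * c + β2 * (c * d) + d * c - d * d := by
    have h := congrFun H22 1
    simp only [mul2, Pi.add_apply, Pi.smul_apply, Pi.neg_apply, smul_eq_mul, Matrix.cons_val_zero,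
      Matrix.cons_val_one, Matrix.head_cons, mul_zero, mul_one, add_zero, zero_add] at h
    rw [hc, hd] at h
    linear_combination h
  have h4 : (4 : F) ≠ 0 := by
    have h := mul_ne_zero h2 h2
    norm_num at h
    exact h
  -- Step 1 : c = 0
  have hc0 : c = 0 := by
    by_contra hc0
    have hd1 : 2 * d + 1 = 0 := by
      have h : c * (2 * d + 1) = 0 := by linear_combination -E7
      exact (mul_eq_zero.mp h).resolve_left hc0
    have hβ21 : β2 - 1 = 0 := by
      have h : c * (β2 - 1) = 0 := by linear_combination E3 - E5
      exact (mul_eq_zero.mp h).resolve_left hc0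
    have T : 4 * c * (2 * a + c) = 0 := by
      linear_combination (-4*c) * E4 + 4*a * E8 + (4*c - 2) * E5 + (4*c*d) * hβ21
        + (2*c + 2*b*c + 2*a - 2*a*d + 4*a*c) * hd1
    have h2ac : 2 * a + c = 0 := by
      rcases mul_eq_zero.mp T with h | h
      · rcases mul_eq_zero.mp h with h | h
        · exact absurd h h4
        · exact absurd h hc0
      · exact h
    have ha0 : a ≠ 0 := by
      intro h; apply hc0; linear_combination h2ac - 2 * h
    have hb4 : 4 * b - 1 = 0 := by
      have h : a * (4 * b - 1) = 0 := by
        linear_combination 2 * E5 + (2*b - 2) * h2ac + a * hd1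
      exact (mul_eq_zero.mp h).resolve_left ha0
    have hcomp : c * b - a * d = 0 := by
      have h : (2:F) * (c * b - a * d) = 0 := by
        linear_combination 2*b * h2ac - a * hb4 - a * hd1
      exact (mul_eq_zero.mp h).resolve_left h2
    have hker : f (c • ![(1:F),0] - a • ![(0:F),1]) = 0 := by
      rw [map_sub, map_smul, map_smul]
      funext i
      fin_cases i <;>
        simp only [Pi.sub_apply, Pi.smul_apply, smul_eq_mul, Pi.zero_apply]
      · show c * f ![(1:F),0] 0 - a * f ![(0:F),1] 0 = 0
        rw [ha, hc]; ring
      · show c * f ![(1:F),0] 1 - a * f ![(0:F),1] 1 = 0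
        rw [hb, hd]; linear_combination hcomp
    have h0 := congrFun (f.map_eq_zero_iff.mp hker) 0
    simp only [Pi.sub_apply, Pi.smul_apply, smul_eq_mul, Matrix.cons_val_zero, Pi.zero_apply,
      mul_one, mul_zero, sub_zero] at h0
    exact hc0 h0
  subst hc0
  -- Step 2 : d = 1
  have hd0 : d ≠ 0 := by
    intro hd0
    have hzero : f ![(0:F),1] = 0 := by
      funext i
      fin_cases i <;> simp only [Pi.zero_apply]
      · show f ![(0:F),1] 0 = 0; exact hc
      · show f ![(0:F),1] 1 = 0; rw [hd]; exact hd0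
    have h1 := congrFun (f.map_eq_zero_iff.mp hzero) 1
    simp at h1
  have hd1 : d = 1 := by
    have h : d * (d - 1) = 0 := by linear_combination E8
    have := (mul_eq_zero.mp h).resolve_left hd0
    linear_combination this
  subst hd1
  -- Step 3 : a*b = 0, a ≠ 0, b = 0, a = 1
  have hab : a * b = 0 := by
    have h : (2:F) * (a * b) = 0 := by linear_combination -E1
    exact (mul_eq_zero.mp h).resolve_left h2
  have ha0 : a ≠ 0 := by
    intro ha0
    have hker : f (![(1:F),0] - b • ![(0:F),1]) = 0 := by
      rw [map_sub, map_smul]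
      funext i
      fin_cases i <;>
        simp only [Pi.sub_apply, Pi.smul_apply, smul_eq_mul, Pi.zero_apply]
      · show f ![(1:F),0] 0 - b * f ![(0:F),1] 0 = 0
        rw [ha, hc, ha0]; ring
      · show f ![(1:F),0] 1 - b * f ![(0:F),1] 1 = 0
        rw [hb, hd]; ring
    have h0 := congrFun (f.map_eq_zero_iff.mp hker) 0
    simp only [Pi.sub_apply, Pi.smul_apply, smul_eq_mul, Matrix.cons_val_zero, Pi.zero_apply,
      mul_zero, sub_zero] at h0
    exact one_ne_zero h0
  have hb0 : b = 0 := (mul_eq_zero.mp hab).resolve_left ha0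
  subst hb0
  have ha1 : a = 1 := by linear_combination -E6
  subst ha1
  -- Conclusion
  refine LinearEquiv.ext fun x => ?_
  have hx : x = x 0 • ![(1:F),0] + x 1 • ![(0:F),1] := by
    funext i; fin_cases i <;> simp
  show f x = x
  conv_lhs => rw [hx]
  rw [map_add, map_smul, map_smul]
  funext i
  fin_cases i <;> simp only [Pi.add_apply, Pi.smul_apply, smul_eq_mul]
  · show x 0 * f ![(1:F),0] 0 + x 1 * f ![(0:F),1] 0 = x 0
    rw [ha, hc]; ring
  · show x 0 * f ![(1:F),0] 1 + x 1 * f ![(0:F),1] 1 = x 1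
    rw [hb, hd]; ring
end

section
/- Let F be a field with char F ≠ 2, 3, and let A be the 2-dimensional algebra with products e1·e1 = α1·e1, e1·e2 = β2·e2, e2·e1 = (1−α1)·e2, e2·e2 = 0, where α1, β2 ∈ F. If β2 ≠ 2α1 − 1, the automorphism group of A consists exactly of the maps e1 ↦ e1, e2 ↦ d·e2 for d ∈ F, d ≠ 0. If β2 = 2α1 − 1, the automorphism group consists exactly of the maps e1 ↦ e1 + c·e2, e2 ↦ d·e2 for c ∈ F, d ∈ F, d ≠ 0. -/
theorem key_aux {F : Type*} [Field F] (h2 : (2:F) ≠ 0) (α1 β2 : F)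
    (f : (Fin 2 → F) ≃ₗ[F] (Fin 2 → F)) :
    (∀ u v, f (mul2 ![α1, 0] ![0, β2] ![0, 1 - α1] ![0, 0] u v)
       = mul2 ![α1, 0] ![0, β2] ![0, 1 - α1] ![0, 0] (f u) (f v)) ↔
    (f ![1,0] 0 = 1 ∧ f ![0,1] 0 = 0 ∧ f ![0,1] 1 ≠ 0 ∧
      f ![1,0] 1 * (β2 + 1 - 2*α1) = 0) := by
  obtain ⟨a, ha⟩ : ∃ x, f ![(1:F),0] 0 = x := ⟨_, rfl⟩
  obtain ⟨b, hb⟩ : ∃ x, f ![(1:F),0] 1 = x := ⟨_, rfl⟩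
  obtain ⟨c, hc⟩ : ∃ x, f ![(0:F),1] 0 = x := ⟨_, rfl⟩
  obtain ⟨d, hd⟩ : ∃ x, f ![(0:F),1] 1 = x := ⟨_, rfl⟩
  have hrepr : ∀ u : Fin 2 → F, u = u 0 • ![(1:F),0] + u 1 • ![(0:F),1] := by
    intro u; funext i; fin_cases i <;> simp
  have hf0 : ∀ u : Fin 2 → F, f u 0 = u 0 * a + u 1 * c := by
    intro u
    conv_lhs => rw [hrepr u]
    rw [map_add, map_smul, map_smul]
    simp [ha, hc, mul_comm]
  have hf1 : ∀ u : Fin 2 → F, f u 1 = u 0 * b + u 1 * d := by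
    intro u
    conv_lhs => rw [hrepr u]
    rw [map_add, map_smul, map_smul]
    simp [hb, hd, mul_comm]
  have hm0 : ∀ u v : Fin 2 → F,
      mul2 ![α1, 0] ![0, β2] ![0, 1 - α1] ![0, 0] u v 0 = u 0 * v 0 * α1 := by
    intro u v; simp [mul2]
  have hm1 : ∀ u v : Fin 2 → F,
      mul2 ![α1, 0] ![0, β2] ![0, 1 - α1] ![0, 0] u v 1
        = u 0 * v 1 * β2 + u 1 * v 0 * (1 - α1) := by
    intro u v; simp [mul2]
  obtain ⟨p, hp⟩ := f.surjective ![1,0]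
  obtain ⟨q, hq⟩ := f.surjective ![0,1]
  have hp0 : p 0 * a + p 1 * c = 1 := by
    have h := congrFun hp 0; rw [hf0] at h; simpa using h
  have hp1 : p 0 * b + p 1 * d = 0 := by
    have h := congrFun hp 1; rw [hf1] at h; simpa using h
  have hq0 : q 0 * a + q 1 * c = 0 := by
    have h := congrFun hq 0; rw [hf0] at h; simpa using h
  have hq1 : q 0 * b + q 1 * d = 1 := by
    have h := congrFun hq 1; rw [hf1] at h; simpa using h
  have hdet : a * d - b * c ≠ 0 := by
    intro h
    have h10 : (1:F) = 0 := by
      linear_combination (-(q 0 * b + q 1 * d)) * hp0 + (q 0 * a + q 1 * c) * hp1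
        - hq1 + (p 0 * q 1 - p 1 * q 0) * h
    exact one_ne_zero h10
  constructor
  · intro H
    have key : ∀ u v : Fin 2 → F,
        (u 0 * v 0 * α1 * a + (u 0 * v 1 * β2 + u 1 * v 0 * (1 - α1)) * c
          = (u 0 * a + u 1 * c) * (v 0 * a + v 1 * c) * α1)
      ∧ (u 0 * v 0 * α1 * b + (u 0 * v 1 * β2 + u 1 * v 0 * (1 - α1)) * d
          = (u 0 * a + u 1 * c) * (v 0 * b + v 1 * d) * β2
            + (u 0 * b + u 1 * d) * (v 0 * a + v 1 * c) * (1 - α1)) := by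
      intro u v
      have h0 := congrFun (H u v) 0
      have h1 := congrFun (H u v) 1
      simp only [hf0, hf1, hm0, hm1] at h0 h1
      exact ⟨by linear_combination h0, by linear_combination h1⟩
    have E1 := (key ![1,0] ![1,0]).1
    have E2 := (key ![1,0] ![1,0]).2
    have E3 := (key ![1,0] ![0,1]).1
    have E4 := (key ![1,0] ![0,1]).2
    have E5 := (key ![0,1] ![1,0]).1
    have E6 := (key ![0,1] ![1,0]).2
    have E8 := (key ![0,1] ![0,1]).2
    have E7 := (key ![0,1] ![0,1]).1
    simp only [Matrix.cons_val_zero, Matrix.cons_val_one, Matrix.head_cons]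
      at E1 E2 E3 E4 E5 E6 E7 E8
    have hc0 : c = 0 := by
      by_contra hcne
      have hα0 : α1 = 0 := by
        have h : c * c * α1 = 0 := by linear_combination -E7
        rcases mul_eq_zero.mp h with h' | h'
        · exact absurd ((mul_eq_zero.mp h').elim id id) hcne
        · exact h'
      have hβ1 : β2 = 1 := by
        have h : (β2 - 1) * c = 0 := by linear_combination E3 - E5 - c * hα0
        rcases mul_eq_zero.mp h with h' | h'
        · linear_combination h'
        · exact absurd h' hcne
      have hd0 : d = 0 := by
        have h : c * d * 2 = 0 := by linear_combination -E8 - c*d*hβ1 + c*d*hα0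
        rcases mul_eq_zero.mp h with h' | h'
        · rcases mul_eq_zero.mp h' with h'' | h''
          · exact absurd h'' hcne
          · exact h''
        · exact absurd h' h2
      have hb0 : b = 0 := by
        have h : b * c = 0 := by
          linear_combination -E4 + (β2 - a*β2) * hd0 + b*c*hα0
        rcases mul_eq_zero.mp h with h' | h'
        · exact h'
        · exact absurd h' hcne
      exact hdet (by rw [hd0, hb0]; ring)
    have hdne : d ≠ 0 := fun h => hdet (by rw [hc0, h]; ring)
    have hane : a ≠ 0 := fun h => hdet (by rw [hc0, h]; ring)
    have hA : α1 * (a - 1) = 0 := by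
      have h : a * (α1 * (a - 1)) = 0 := by linear_combination -E1
      exact (mul_eq_zero.mp h).resolve_left hane
    have hB : (1 - α1) * (a - 1) = 0 := by
      have h : d * ((1 - α1) * (a - 1)) = 0 := by
        linear_combination -E6 - b*β2*hc0
      exact (mul_eq_zero.mp h).resolve_left hdne
    have ha1 : a = 1 := by linear_combination hA + hB
    have hbcond : b * (β2 + 1 - 2*α1) = 0 := by
      linear_combination -E2 - (b*β2 + b - b*α1) * ha1
    exact ⟨by rw [ha]; exact ha1, by rw [hc]; exact hc0,
      by rw [hd]; exact hdne, by rw [hb]; exact hbcond⟩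
  · rintro ⟨h1, h2', h3', h4⟩
    have ha1 : a = 1 := by rw [← ha]; exact h1
    have hc0 : c = 0 := by rw [← hc]; exact h2'
    have hb4 : b * (β2 + 1 - 2*α1) = 0 := by rw [← hb]; exact h4
    intro u v
    have comp0 : f (mul2 ![α1, 0] ![0, β2] ![0, 1 - α1] ![0, 0] u v) 0
        = mul2 ![α1, 0] ![0, β2] ![0, 1 - α1] ![0, 0] (f u) (f v) 0 := by
      simp only [hf0, hf1, hm0, hm1, ha1, hc0]
      ring
    have comp1 : f (mul2 ![α1, 0] ![0, β2] ![0, 1 - α1] ![0, 0] u v) 1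
        = mul2 ![α1, 0] ![0, β2] ![0, 1 - α1] ![0, 0] (f u) (f v) 1 := by
      simp only [hf0, hf1, hm0, hm1, ha1, hc0]
      linear_combination (-(u 0 * v 0)) * hb4
    funext i
    fin_cases i
    · exact comp0
    · exact comp1

theorem stmt3 {F : Type*} [Field F] (h2 : (2 : F) ≠ 0) (h3 : (3 : F) ≠ 0) (α1 β2 : F)
    (mul : (Fin 2 → F) → (Fin 2 → F) → (Fin 2 → F))
    (hmul : mul = mul2 ![α1, 0] ![0, β2] ![0, 1 - α1] ![0, 0]) :
    (β2 ≠ 2 * α1 - 1 → ∀ f : (Fin 2 → F) ≃ₗ[F] (Fin 2 → F), (∀ u v, f (mul u v) = mul (f u) (f v)) ↔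
      (∃ dd : F, dd ≠ 0 ∧ f ![1, 0] = ![1, 0] ∧ f ![0, 1] = ![0, dd])) ∧
    (β2 = 2 * α1 - 1 → ∀ f : (Fin 2 → F) ≃ₗ[F] (Fin 2 → F), (∀ u v, f (mul u v) = mul (f u) (f v)) ↔
      (∃ c dd : F, dd ≠ 0 ∧ f ![1, 0] = ![1, c] ∧ f ![0, 1] = ![0, dd])) := by
  subst hmul
  constructor
  · intro hne f
    rw [key_aux h2 α1 β2 f]
    constructor
    · rintro ⟨ha1, hc0, hdne, hbc⟩
      have hne' : β2 + 1 - 2*α1 ≠ 0 := fun h => hne (by linear_combination h)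
      have hb0 : f ![1,0] 1 = 0 := (mul_eq_zero.mp hbc).resolve_right hne'
      refine ⟨f ![0,1] 1, hdne, ?_, ?_⟩
      · funext i; fin_cases i
        · simpa using ha1
        · simpa using hb0
      · funext i; fin_cases i
        · simpa using hc0
        · simp
    · rintro ⟨dd, hdd, he1, he2⟩
      refine ⟨by rw [he1]; simp, by rw [he2]; simp, ?_, ?_⟩
      · rw [he2]; simpa using hdd
      · rw [he1]; simp
  · intro heq f
    rw [key_aux h2 α1 β2 f]
    constructor
    · rintro ⟨ha1, hc0, hdne, hbc⟩
      refine ⟨f ![1,0] 1, f ![0,1] 1, hdne, ?_, ?_⟩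
      · funext i; fin_cases i
        · simpa using ha1
        · simp
      · funext i; fin_cases i
        · simpa using hc0
        · simp
    · rintro ⟨c, dd, hdd, he1, he2⟩
      refine ⟨by rw [he1]; simp, by rw [he2]; simp, ?_, ?_⟩
      · rw [he2]; simpa using hdd
      · rw [he1, heq]; simp
end

section
/- Let F be a field with char F ≠ 2, 3, and let A be the 2-dimensional algebra with products e1·e1 = α1·e1 + e2, e1·e2 = (2α1−1)·e2, e2·e1 = (1−α1)·e2, e2·e2 = 0, where α1 ∈ F. Then the automorphism group of A consists exactly of the maps e1 ↦ e1 + c·e2, e2 ↦ e2 for c ∈ F; in particular it is isomorphic to the additive group of F. -/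
section

variable {F : Type*} [Field F]

def mulA (α : F) : (Fin 2 → F) → (Fin 2 → F) → Fin 2 → F :=
  mul2 ![α, 1] ![0, 2 * α - 1] ![0, 1 - α] ![0, 0]

section mulA

variable (α : F) (u v : Fin 2 → F)

@[simp]
lemma mulA_apply_zero : mulA α u v 0 = α * (u 0 * v 0) := by
  simp [mulA, mul2, mul_comm]

@[simp]
lemma mulA_apply_one :
    mulA α u v 1 = u 0 * v 0 + (2 * α - 1) * (u 0 * v 1) + (1 - α) * (u 1 * v 0) := by
  simp only [mulA, mul2, Pi.add_apply, Pi.smul_apply, smul_eq_mul, Matrix.cons_val_one,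
    Matrix.cons_val_fin_one]
  ring

lemma mulA_e1_e1 : mulA α ![1, 0] ![1, 0] = α • ![1, 0] + ![0, 1] := by
  ext i; fin_cases i <;> simp

lemma mulA_e1_e2 : mulA α ![1, 0] ![0, 1] = (2 * α - 1) • ![0, 1] := by
  ext i; fin_cases i <;> simp

lemma mulA_e2_e1 : mulA α ![0, 1] ![1, 0] = (1 - α) • ![0, 1] := by
  ext i; fin_cases i <;> simp

lemma mulA_e2_e2 : mulA α ![0, 1] ![0, 1] = 0 := by
  ext i; fin_cases i <;> simp

lemma mulA_shear (c : F) :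
    mulA α (u 0 • ![1, c] + u 1 • ![0, 1]) (v 0 • ![1, c] + v 1 • ![0, 1]) =
      mulA α u v 0 • ![1, c] + mulA α u v 1 • ![0, 1] := by
  refine funext (Fin.forall_fin_two.2 ⟨by simp, ?_⟩)
  simp only [mulA_apply_zero, mulA_apply_one, Pi.add_apply, Pi.smul_apply, smul_eq_mul,
    Matrix.cons_val_zero, Matrix.cons_val_one, Matrix.cons_val_fin_one]
  ring

end mulA

lemma apply_zero_eq_zero_of_mulA_self_eq_zero {α : F} {y : Fin 2 → F} (h : mulA α y y = 0) :
    y 0 = 0 := by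
  have h0 := congr_fun h 0
  have h1 := congr_fun h 1
  simp only [mulA_apply_zero, mulA_apply_one, Pi.zero_apply] at h0 h1
  exact pow_eq_zero_iff (n := 3) (by norm_num) |>.1 (by linear_combination y 0 * h1 - y 1 * h0)

lemma apply_zero_eq_one_and_eq_e2_of_basis_products {α : F} {x y : Fin 2 → F} (hy : y ≠ 0)
    (hyy : mulA α y y = 0) (hxy : mulA α x y = (2 * α - 1) • y)
    (hyx : mulA α y x = (1 - α) • y) (hxx : mulA α x x = α • x + y) :
    x 0 = 1 ∧ y = ![0, 1] := by
  have hy0 := apply_zero_eq_zero_of_mulA_self_eq_zero hyy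
  have hy1 : y 1 ≠ 0 := fun hy1 ↦ hy (by ext i; fin_cases i <;> simp [hy0, hy1])
  have hxy1 := congr_fun hxy 1
  have hyx1 := congr_fun hyx 1
  have hxx1 := congr_fun hxx 1
  simp only [mulA_apply_one, Pi.smul_apply, Pi.add_apply, smul_eq_mul, hy0] at hxy1 hyx1 hxx1
  -- `(2α - 1) + 2 (1 - α) = 1`, so the two relations combine to `(x 0 - 1) y 1 = 0`.
  have hx0 : x 0 = 1 := by
    have : (x 0 - 1) * y 1 = 0 := by linear_combination hxy1 + 2 * hyx1
    exact sub_eq_zero.1 ((mul_eq_zero.1 this).resolve_right hy1)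
  refine ⟨hx0, ?_⟩
  ext i; fin_cases i
  · simpa using hy0
  · simp only [hx0] at hxx1
    simpa using (by linear_combination -hxx1 : y 1 = 1)

lemma apply_eq_of_apply_e1_of_apply_e2 {M : Type*} [AddCommGroup M] [Module F M]
    {f : (Fin 2 → F) →ₗ[F] M} {x y : M}
    (h1 : f ![1, 0] = x) (h2 : f ![0, 1] = y) (w : Fin 2 → F) :
    f w = w 0 • x + w 1 • y := by
  have hw : w = w 0 • ![1, 0] + w 1 • ![0, 1] := by
    ext i; fin_cases i <;> simp
  rw [hw, map_add, map_smul, map_smul, h1, h2]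
  simp

end

theorem stmt4_general {F : Type*} [Field F] (α1 : F)
    (mul : (Fin 2 → F) → (Fin 2 → F) → (Fin 2 → F))
    (hmul : mul = mul2 ![α1, 1] ![0, 2 * α1 - 1] ![0, 1 - α1] ![0, 0]) :
    ∀ f : (Fin 2 → F) ≃ₗ[F] (Fin 2 → F), (∀ u v, f (mul u v) = mul (f u) (f v)) ↔ (∃ c : F, f ![1, 0] = ![1, c] ∧ f ![0, 1] = ![0, 1]) := by
  obtain rfl : mul = mulA α1 := hmul
  intro f
  constructor
  · intro hf
    have he2 : f ![0, 1] ≠ 0 := (map_ne_zero_iff f f.injective).2 (by simp)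
    obtain ⟨hx0, hy⟩ := apply_zero_eq_one_and_eq_e2_of_basis_products he2
      (by rw [← hf, mulA_e2_e2, map_zero]) (by rw [← hf, mulA_e1_e2, map_smul])
      (by rw [← hf, mulA_e2_e1, map_smul]) (by rw [← hf, mulA_e1_e1, map_add, map_smul])
    exact ⟨f ![1, 0] 1, by ext i; fin_cases i <;> simp [hx0], hy⟩
  · rintro ⟨c, h1, h2⟩ u v
    have hf := apply_eq_of_apply_e1_of_apply_e2 (f := f.toLinearMap) h1 h2
    simp only [LinearEquiv.coe_coe] at hf
    rw [hf, hf, hf, mulA_shear]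

theorem stmt4 {F : Type*} [Field F] (h2 : (2 : F) ≠ 0) (h3 : (3 : F) ≠ 0) (α1 : F)
    (mul : (Fin 2 → F) → (Fin 2 → F) → (Fin 2 → F))
    (hmul : mul = mul2 ![α1, 1] ![0, 2 * α1 - 1] ![0, 1 - α1] ![0, 0]) :
    ∀ f : (Fin 2 → F) ≃ₗ[F] (Fin 2 → F), (∀ u v, f (mul u v) = mul (f u) (f v)) ↔ (∃ c : F, f ![1, 0] = ![1, c] ∧ f ![0, 1] = ![0, 1]) :=
  stmt4_general α1 mul hmul
end

section
/- Let F be a field with char F ≠ 2, 3, and let A be the 2-dimensional algebra with products e1·e1 = β1·e2, e1·e2 = e1 + e2, e2·e1 = e1, e2·e2 = −e2, where β1 ∈ F. Then the only automorphism of A is the identity. -/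
theorem stmt5 {F : Type*} [Field F] (h2 : (2 : F) ≠ 0) (h3 : (3 : F) ≠ 0) (β1 : F)
    (mul : (Fin 2 → F) → (Fin 2 → F) → (Fin 2 → F))
    (hmul : mul = mul2 ![0, β1] ![1, 1] ![1, 0] ![0, -1]) :
    ∀ f : (Fin 2 → F) ≃ₗ[F] (Fin 2 → F), (∀ u v, f (mul u v) = mul (f u) (f v)) → f = LinearEquiv.refl F (Fin 2 → F) := by
  subst hmul
  intro f hf
  set e1 : Fin 2 → F := ![1, 0] with he1
  set e2 : Fin 2 → F := ![0, 1] with he2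
  have he12 : mul2 ![0, β1] ![1, 1] ![1, 0] ![0, -1] e1 e2 = e1 + e2 := by
    funext i; fin_cases i <;> simp [mul2, he1, he2]
  have he21 : mul2 ![0, β1] ![1, 1] ![1, 0] ![0, -1] e2 e1 = e1 := by
    funext i; fin_cases i <;> simp [mul2, he1, he2]
  have he11 : mul2 ![0, β1] ![1, 1] ![1, 0] ![0, -1] e1 e1 = β1 • e2 := by
    funext i; fin_cases i <;> simp [mul2, he1, he2]
  have he22 : mul2 ![0, β1] ![1, 1] ![1, 0] ![0, -1] e2 e2 = -e2 := by
    funext i; fin_cases i <;> simp [mul2, he1, he2]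
  set a : F := f e1 0 with ha
  set b : F := f e1 1 with hb
  set c : F := f e2 0 with hc
  set d : F := f e2 1 with hd
  have mulval : ∀ u v : Fin 2 → F,
      (mul2 ![0, β1] ![1, 1] ![1, 0] ![0, -1] u v 0 = u 0 * v 1 + u 1 * v 0) ∧
      (mul2 ![0, β1] ![1, 1] ![1, 0] ![0, -1] u v 1 = u 0 * v 0 * β1 + u 0 * v 1 - u 1 * v 1) := by
    intro u v
    constructor <;> simp [mul2] <;> ring
  -- equation from e1·e2
  have E12 := hf e1 e2
  rw [he12, map_add] at E12
  have E12a : a + c = a * d + b * c := by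
    have := congrFun E12 0
    rw [(mulval _ _).1] at this
    simpa using this
  have E12b : b + d = a * c * β1 + a * d - b * d := by
    have := congrFun E12 1
    rw [(mulval _ _).2] at this
    simpa using this
  -- equation from e2·e1
  have E21 := hf e2 e1
  rw [he21] at E21
  have E21a : a = c * b + d * a := by
    have := congrFun E21 0
    rw [(mulval _ _).1] at this
    simpa using this
  -- equation from e1·e1
  have E11 := hf e1 e1
  rw [he11, map_smul] at E11
  have E11a : β1 * c = a * b + b * a := by
    have := congrFun E11 0
    rw [(mulval _ _).1] at this
    simpa using this
  -- equation from e2·e2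
  have E22 := hf e2 e2
  rw [he22, map_neg] at E22
  have E22b : -d = c * c * β1 + c * d - d * d := by
    have := congrFun E22 1
    rw [(mulval _ _).2] at this
    simpa using this
  -- derive c = 0
  have hc0 : c = 0 := by linear_combination E12a - E21a
  -- derive d = 1
  have hdd : d * d = d := by
    rw [hc0] at E22b
    linear_combination E22b
  have hdne : d ≠ 0 := by
    intro hd0
    have hz : f e2 = 0 := by
      funext i; fin_cases i
      · simpa using hc0
      · simpa using hd0
    have h0 : e2 = 0 := f.injective (by rw [hz, map_zero])
    have := congrFun h0 1
    simp [he2] at this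
  have hd1 : d = 1 := by
    have h : d * (d - 1) = 0 := by linear_combination hdd
    rcases mul_eq_zero.mp h with h | h
    · exact absurd h hdne
    · exact sub_eq_zero.mp h
  have hab : a * b = 0 := by
    rw [hc0] at E11a
    have h : 2 * (a * b) = 0 := by linear_combination -E11a
    rcases mul_eq_zero.mp h with h | h
    · exact absurd h h2
    · exact h
  have hane : a ≠ 0 := by
    intro ha0
    have hz : f (e1 - b • e2) = 0 := by
      rw [map_sub, map_smul]
      funext i; fin_cases i
      · simpa using by rw [← ha, ← hc, ha0, hc0, mul_zero, sub_zero]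
      · simpa using by rw [← hb, ← hd, hd1, mul_one, sub_self]
    have h0 : e1 - b • e2 = 0 := f.injective (by rw [hz, map_zero])
    have := congrFun h0 0
    simp [he1, he2] at this
  have hb0 : b = 0 := by
    rcases mul_eq_zero.mp hab with h | h
    · exact absurd h hane
    · exact h
  have ha1 : a = 1 := by
    rw [hb0, hd1, hc0] at E12b
    linear_combination -E12b
  have hfe1 : f e1 = e1 := by
    funext i; fin_cases i
    · simpa [he1] using ha1
    · simpa [he1] using hb0
  have hfe2 : f e2 = e2 := by
    funext i; fin_cases i
    · simpa [he2] using hc0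
    · simpa [he2] using hd1
  apply LinearEquiv.ext
  intro x
  have hx : x = x 0 • e1 + x 1 • e2 := by
    funext i; fin_cases i <;> simp [he1, he2]
  rw [hx, map_add, map_smul, map_smul, hfe1, hfe2]
  simp
end

section
/- Let F be a field with char F ≠ 2, 3, and let A be the 2-dimensional algebra with products e1·e1 = α1·e1, e1·e2 = (1−α1)·e2, e2·e1 = −α1·e2, e2·e2 = 0, where α1 ∈ F. If α1 ≠ 1/3, the automorphism group of A is exactly { e1 ↦ e1, e2 ↦ d·e2 : d ≠ 0 }; if α1 = 1/3, it is exactly { e1 ↦ e1 + c·e2, e2 ↦ d·e2 : c ∈ F, d ≠ 0 }. -/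
/-!
Write `f e1 = (a, b)` and `f e2 = (c, d)`. Comparing `f (e1 e2)` with `f (e2 e1)` forces `c = 0`
and `d = a d`; injectivity gives `d ≠ 0`, hence `a = 1`. Then `f (e1 e1) = f e1 · f e1` reduces
to `b (1 - 3 α1) = 0`, and conversely these conditions make `f` multiplicative. So `b` must vanish
unless `α1 = 1/3`, in which case it is free.
-/

theorem exists_eq_vec_fin_two {α : Type*} (x : Fin 2 → α) : ∃ a b : α, x = ![a, b] :=
  ⟨x 0, x 1, by ext i; fin_cases i <;> rfl⟩

section

variable {F : Type*} [Field F]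

theorem LinearMap.apply_fin_two (f : (Fin 2 → F) →ₗ[F] (Fin 2 → F)) {a b c d : F}
    (h1 : f ![1, 0] = ![a, b]) (h2 : f ![0, 1] = ![c, d]) (u : Fin 2 → F) :
    f u = ![u 0 * a + u 1 * c, u 0 * b + u 1 * d] := by
  have hu : u = u 0 • ![1, 0] + u 1 • ![0, 1] := by ext i; fin_cases i <;> simp
  rw [hu, map_add, map_smul, map_smul, h1, h2]
  ext i; fin_cases i <;> simp

theorem mul2_map_of_images (α : F) (f : (Fin 2 → F) →ₗ[F] (Fin 2 → F)) {b d : F}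
    (hb : b * (1 - 3 * α) = 0) (h1 : f ![1, 0] = ![1, b]) (h2 : f ![0, 1] = ![0, d])
    (u v : Fin 2 → F) :
    f (mul2 ![α, 0] ![0, 1 - α] ![0, -α] ![0, 0] u v) =
      mul2 ![α, 0] ![0, 1 - α] ![0, -α] ![0, 0] (f u) (f v) := by
  simp only [f.apply_fin_two h1 h2]
  ext i; fin_cases i <;> simp [mul2]
  linear_combination -(u 0 * v 0) * hb

theorem images_of_mul2_map (α : F) (f : (Fin 2 → F) →ₗ[F] (Fin 2 → F))
    (hf : Function.Injective f)
    (hom : ∀ u v, f (mul2 ![α, 0] ![0, 1 - α] ![0, -α] ![0, 0] u v) =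
      mul2 ![α, 0] ![0, 1 - α] ![0, -α] ![0, 0] (f u) (f v)) :
    ∃ b d : F, d ≠ 0 ∧ b * (1 - 3 * α) = 0 ∧ f ![1, 0] = ![1, b] ∧ f ![0, 1] = ![0, d] := by
  obtain ⟨a, b, h1⟩ := exists_eq_vec_fin_two (f ![1, 0])
  obtain ⟨c, d, h2⟩ := exists_eq_vec_fin_two (f ![0, 1])
  have hom_apply u v i := congrFun (hom u v) i
  have h12 := hom_apply ![1, 0] ![0, 1]
  have h21 := hom_apply ![0, 1] ![1, 0]
  have h11 := hom_apply ![1, 0] ![1, 0] 1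
  simp [f.apply_fin_two h1 h2, mul2] at h12 h21 h11
  have hc : c = 0 := by linear_combination h12.1 - h21.1
  have hd : d ≠ 0 := by
    rintro rfl
    have : f ![0, 1] = f 0 := by rw [h2, hc, map_zero]; ext i; fin_cases i <;> rfl
    simpa using congrFun (hf this) 1
  have ha : a = 1 := by
    have : d * (a - 1) = 0 := by linear_combination h21.2 - h12.2 + b * hc
    simpa [hd, sub_eq_zero] using this
  subst ha hc
  exact ⟨b, d, hd, by linear_combination -h11, h1, h2⟩

theorem mul2_map_iff (α : F) (f : (Fin 2 → F) ≃ₗ[F] (Fin 2 → F)) :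
    (∀ u v, f (mul2 ![α, 0] ![0, 1 - α] ![0, -α] ![0, 0] u v) =
      mul2 ![α, 0] ![0, 1 - α] ![0, -α] ![0, 0] (f u) (f v)) ↔
    ∃ b d : F, d ≠ 0 ∧ b * (1 - 3 * α) = 0 ∧ f ![1, 0] = ![1, b] ∧ f ![0, 1] = ![0, d] :=
  ⟨images_of_mul2_map α f.toLinearMap f.injective,
    fun ⟨_, _, _, hb, h1, h2⟩ => mul2_map_of_images α f.toLinearMap hb h1 h2⟩

end

theorem stmt6_general {F : Type*} [Field F] (h3 : (3 : F) ≠ 0) (α1 : F)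
    (mul : (Fin 2 → F) → (Fin 2 → F) → (Fin 2 → F))
    (hmul : mul = mul2 ![α1, 0] ![0, 1 - α1] ![0, -α1] ![0, 0]) :
    (α1 ≠ (3 : F)⁻¹ → ∀ f : (Fin 2 → F) ≃ₗ[F] (Fin 2 → F), (∀ u v, f (mul u v) = mul (f u) (f v)) ↔
      (∃ dd : F, dd ≠ 0 ∧ f ![1, 0] = ![1, 0] ∧ f ![0, 1] = ![0, dd])) ∧
    (α1 = (3 : F)⁻¹ → ∀ f : (Fin 2 → F) ≃ₗ[F] (Fin 2 → F), (∀ u v, f (mul u v) = mul (f u) (f v)) ↔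
      (∃ c dd : F, dd ≠ 0 ∧ f ![1, 0] = ![1, c] ∧ f ![0, 1] = ![0, dd])) := by
  have hthird : 1 - 3 * α1 = 0 ↔ α1 = 3⁻¹ := by
    rw [sub_eq_zero, eq_comm, mul_comm, mul_eq_one_iff_eq_inv₀ h3]
  subst hmul
  refine ⟨fun hα f => ?_, fun hα f => ?_⟩ <;> rw [mul2_map_iff]
  · have hthird' : 1 - 3 * α1 ≠ 0 := mt hthird.mp hα
    simp [hthird']
  · simp only [hthird.mpr hα, mul_zero, true_and]

theorem stmt6 {F : Type*} [Field F] (h2 : (2 : F) ≠ 0) (h3 : (3 : F) ≠ 0) (α1 : F)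
    (mul : (Fin 2 → F) → (Fin 2 → F) → (Fin 2 → F))
    (hmul : mul = mul2 ![α1, 0] ![0, 1 - α1] ![0, -α1] ![0, 0]) :
    (α1 ≠ (3 : F)⁻¹ → ∀ f : (Fin 2 → F) ≃ₗ[F] (Fin 2 → F), (∀ u v, f (mul u v) = mul (f u) (f v)) ↔
      (∃ dd : F, dd ≠ 0 ∧ f ![1, 0] = ![1, 0] ∧ f ![0, 1] = ![0, dd])) ∧
    (α1 = (3 : F)⁻¹ → ∀ f : (Fin 2 → F) ≃ₗ[F] (Fin 2 → F), (∀ u v, f (mul u v) = mul (f u) (f v)) ↔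
      (∃ c dd : F, dd ≠ 0 ∧ f ![1, 0] = ![1, c] ∧ f ![0, 1] = ![0, dd])) :=
  stmt6_general h3 α1 mul hmul
end

section
/- Let F be any field and let A be the 2-dimensional algebra with products e1·e1 = e2, e1·e2 = e2·e1 = e2·e2 = 0. Then the automorphism group of A consists exactly of the maps e1 ↦ a·e1 + c·e2, e2 ↦ a²·e2 with a ∈ F, a ≠ 0, c ∈ F. -/
lemma decomp2 {F : Type*} [Field F] (u : Fin 2 → F) :
    u = u 0 • ![(1:F), 0] + u 1 • ![0, 1] := by
  funext i; fin_cases i <;> simp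

lemma mul_eq {F : Type*} [Field F] (u v : Fin 2 → F) :
    mul2 ![(0:F), 1] ![0, 0] ![0, 0] ![0, 0] u v = ![0, u 0 * v 0] := by
  funext i; fin_cases i <;> simp [mul2]

theorem stmt8 {F : Type*} [Field F]
    (mul : (Fin 2 → F) → (Fin 2 → F) → (Fin 2 → F))
    (hmul : mul = mul2 ![0, 1] ![0, 0] ![0, 0] ![0, 0]) :
    ∀ f : (Fin 2 → F) ≃ₗ[F] (Fin 2 → F), (∀ u v, f (mul u v) = mul (f u) (f v)) ↔ (∃ a c : F, a ≠ 0 ∧ f ![1, 0] = ![a, c] ∧ f ![0, 1] = ![0, a ^ 2]) := by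
  subst hmul
  intro f
  constructor
  · intro h
    refine ⟨f ![1,0] 0, f ![1,0] 1, ?_, ?_, ?_⟩
    · intro ha
      have h1 := h ![1,0] ![1,0]
      rw [mul_eq, mul_eq] at h1
      simp at h1
      have : f ![(0:F),1] = 0 := by
        rw [h1]
        funext i; fin_cases i <;> simp [ha]
      have h0 : (![(0:F),1] : Fin 2 → F) = 0 := f.injective (by simp [this])
      have := congrFun h0 1
      simp at this
    · funext i; fin_cases i <;> simp
    · have h1 := h ![1,0] ![1,0]
      rw [mul_eq, mul_eq] at h1
      simp at h1
      rw [h1]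
      funext i; fin_cases i <;> simp [sq]
  · rintro ⟨a, c, -, h1, h2⟩
    intro u v
    rw [mul_eq, mul_eq]
    have hfu : ∀ w : Fin 2 → F, f w = ![w 0 * a, w 0 * c + w 1 * a ^ 2] := by
      intro w
      conv_lhs => rw [decomp2 w]
      rw [map_add, map_smul, map_smul, h1, h2]
      funext i; fin_cases i <;> simp [mul_comm]
    rw [hfu u, hfu v]
    have : f ![0, u 0 * v 0] = (u 0 * v 0) • f ![0,1] := by
      rw [← map_smul]
      congr 1
      funext i; fin_cases i <;> simp
    rw [this, h2]
    funext i; fin_cases i <;> simp <;> ring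
end

section
/- Let F be a field with char F = 2, and let A be the 2-dimensional algebra with products e1·e1 = α1·e1, e1·e2 = e1 + β2·e2, e2·e1 = e1 + (1−α1)·e2, e2·e2 = e2, where α1, β2 ∈ F. Then the automorphism group of A consists exactly of two elements: the identity and the map e1 ↦ e1 + (1+β2)·e2, e2 ↦ e2. -/
lemma alg9 {F : Type*} [Field F] (h2 : (2:F) = 0) (α1 β2 a b c d : F)
    (e1a : α1 * a = a*a*α1 + a*b + b*a)
    (e1b : α1 * b = a*b*β2 + b*a*(1-α1) + b*b)
    (e2a : a + β2*c = a*c*α1 + a*d + b*c)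
    (e2b : b + β2*d = a*d*β2 + b*c*(1-α1) + b*d)
    (e3a : a + (1-α1)*c = c*a*α1 + c*b + d*a)
    (e3b : b + (1-α1)*d = c*b*β2 + d*a*(1-α1) + d*b)
    (e4a : c = c*c*α1 + c*d + d*c)
    (e4b : d = c*d*β2 + d*c*(1-α1) + d*d)
    (hdet : a*d + b*c ≠ 0) :
    (a = 1 ∧ b = 0 ∧ c = 0 ∧ d = 1) ∨ (a = 1 ∧ b = 1 + β2 ∧ c = 0 ∧ d = 1) := by
  by_cases hc : c = 0
  · subst hc
    simp only [mul_zero, zero_mul, add_zero, zero_add] at hdet e4b e2b e3b e1a e1b e2a e3a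
    rcases mul_ne_zero_iff.mp hdet with ⟨ha0, hd0⟩
    have hd1 : d = 1 := (mul_left_cancel₀ hd0 (by linear_combination -e4b + (d - d^2)*h2)).symm
    subst hd1
    have hA : β2 * (1 - a) = 0 := by linear_combination e2b
    have hB : (1 - α1) * (1 - a) = 0 := by linear_combination e3b
    have ha1 : a = 1 := by
      by_contra hne
      have h1a : (1:F) - a ≠ 0 := sub_ne_zero_of_ne (Ne.symm hne)
      have hb2 : β2 = 0 := (mul_eq_zero.mp hA).resolve_right h1a
      have hα1 : α1 = 1 := by
        have := (mul_eq_zero.mp hB).resolve_right h1a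
        linear_combination -this
      exact hne (mul_left_cancel₀ ha0 (by linear_combination e1a + a*b*h2 + a*(a-1)*hα1)).symm
    subst ha1
    have hb : b * (b - (1+β2)) = 0 := by linear_combination -e1b + (b*(α1 - β2 - 1))*h2
    rcases mul_eq_zero.mp hb with hb0 | hb1
    · exact Or.inl ⟨rfl, hb0, rfl, rfl⟩
    · exact Or.inr ⟨rfl, by linear_combination hb1, rfl, rfl⟩
  · exfalso
    have hβc : (β2 - (1 - α1)) * c = 0 := by linear_combination e2a - e3a
    have hβ : β2 = 1 - α1 := by
      have := (mul_eq_zero.mp hβc).resolve_right hc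
      linear_combination this
    subst hβ
    have hαc : α1 * c = 1 := mul_left_cancel₀ hc (by linear_combination -e4a - c*d*h2)
    have hα0 : α1 ≠ 0 := left_ne_zero_of_mul_eq_one hαc
    have hd : d * (d - 1) = 0 := by linear_combination e4b + c*d*(1-α1)*h2 + (d^2 - d)*h2
    have ha : a * (a - 1) = 0 := mul_left_cancel₀ hα0 (by linear_combination -e1a - a*b*h2)
    have hb : b * (b - α1) = 0 := by linear_combination -e1b - a*b*(1-α1)*h2
    have hbval : b = (1 - α1) - α1*a*d := by
      linear_combination (-α1) * e2a - (b + α1 - 1 + a*α1) * hαc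
    rcases mul_eq_zero.mp hd with hd0 | hd1
    · subst hd0
      simp only [mul_zero, add_zero] at hdet hbval
      have hb0 : b ≠ 0 := fun h => hdet (by rw [h]; ring)
      have hbα : b = α1 := by
        have := (mul_eq_zero.mp hb).resolve_left hb0
        linear_combination this
      exact one_ne_zero (by linear_combination hbα - hbval + α1*h2 : (1:F) = 0)
    · have hd1' : d = 1 := by linear_combination hd1
      subst hd1'
      rcases mul_eq_zero.mp ha with ha0 | ha1
      · subst ha0
        simp only [zero_mul, mul_zero, zero_add, mul_one, sub_zero] at hdet hbval
        have hb0 : b ≠ 0 := fun h => hdet (by rw [h]; ring)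
        have hbα : b = α1 := by
          have := (mul_eq_zero.mp hb).resolve_left hb0
          linear_combination this
        exact one_ne_zero (by linear_combination hbα - hbval + α1*h2 : (1:F) = 0)
      · have ha1' : a = 1 := by linear_combination ha1
        subst ha1'
        have hb1 : b = 1 := by linear_combination hbval - α1*h2
        subst hb1
        have hα1 : α1 = 1 := by linear_combination -hb
        rw [hα1, one_mul] at hαc
        subst hαc
        exact hdet (by linear_combination h2)

theorem stmt9 {F : Type*} [Field F] [CharP F 2] (α1 β2 : F)
    (mul : (Fin 2 → F) → (Fin 2 → F) → (Fin 2 → F))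
    (hmul : mul = mul2 ![α1, 0] ![1, β2] ![1, 1 - α1] ![0, 1]) :
    ∀ f : (Fin 2 → F) ≃ₗ[F] (Fin 2 → F), (∀ u v, f (mul u v) = mul (f u) (f v)) ↔
      ((f ![1, 0] = ![1, 0] ∧ f ![0, 1] = ![0, 1]) ∨
       (f ![1, 0] = ![1, 1 + β2] ∧ f ![0, 1] = ![0, 1])) := by
  subst hmul
  have h2 : (2:F) = 0 := by exact_mod_cast CharP.cast_eq_zero F 2
  intro f
  constructor
  · intro hf
    have m11 : mul2 ![α1, 0] ![1, β2] ![1, 1 - α1] ![0, 1] ![(1:F),0] ![1,0] = α1 • ![(1:F),0] := by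
      funext i; fin_cases i <;> simp [mul2]
    have m12 : mul2 ![α1, 0] ![1, β2] ![1, 1 - α1] ![0, 1] ![(1:F),0] ![0,1] = ![(1:F),0] + β2 • ![(0:F),1] := by
      funext i; fin_cases i <;> simp [mul2]
    have m21 : mul2 ![α1, 0] ![1, β2] ![1, 1 - α1] ![0, 1] ![(0:F),1] ![1,0] = ![(1:F),0] + (1-α1) • ![(0:F),1] := by
      funext i; fin_cases i <;> simp [mul2]
    have m22 : mul2 ![α1, 0] ![1, β2] ![1, 1 - α1] ![0, 1] ![(0:F),1] ![0,1] = ![(0:F),1] := by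
      funext i; fin_cases i <;> simp [mul2]
    have E1 := hf ![1,0] ![1,0]
    rw [m11, map_smul] at E1
    have e1a := congrFun E1 0
    have e1b := congrFun E1 1
    simp [mul2] at e1a e1b
    have E2 := hf ![1,0] ![0,1]
    rw [m12, map_add, map_smul] at E2
    have e2a := congrFun E2 0
    have e2b := congrFun E2 1
    simp [mul2] at e2a e2b
    have E3 := hf ![0,1] ![1,0]
    rw [m21, map_add, map_smul] at E3
    have e3a := congrFun E3 0
    have e3b := congrFun E3 1
    simp [mul2] at e3a e3b
    have E4 := hf ![0,1] ![0,1]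
    rw [m22] at E4
    have e4a := congrFun E4 0
    have e4b := congrFun E4 1
    simp [mul2] at e4a e4b
    have hdet : f ![1,0] 0 * f ![0,1] 1 + f ![1,0] 1 * f ![0,1] 0 ≠ 0 := by
      intro h0
      have z1 : f (f ![0,1] 1 • ![1,0] + f ![1,0] 1 • ![0,1]) = 0 := by
        rw [map_add, map_smul, map_smul]
        funext i; fin_cases i <;> simp
        · linear_combination h0
        · linear_combination (f ![1,0] 1 * f ![0,1] 1) * h2
      have hv := (LinearEquiv.map_eq_zero_iff f).mp z1
      have hd0 := congrFun hv 0
      have hb0 := congrFun hv 1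
      simp at hd0 hb0
      have z2 : f (f ![0,1] 0 • ![1,0] + f ![1,0] 0 • ![0,1]) = 0 := by
        rw [map_add, map_smul, map_smul]
        funext i; fin_cases i <;> simp
        · linear_combination (f ![1,0] 0 * f ![0,1] 0) * h2
        · linear_combination h0
      have hv2 := (LinearEquiv.map_eq_zero_iff f).mp z2
      have hc0 := congrFun hv2 0
      have ha0 := congrFun hv2 1
      simp at hc0 ha0
      have hz : f ![(1:F),0] = 0 := by
        funext i; fin_cases i <;> simp [ha0, hb0]
      have := (LinearEquiv.map_eq_zero_iff f).mp hz
      have := congrFun this 0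
      simp at this
    rcases alg9 h2 α1 β2 _ _ _ _ e1a e1b e2a e2b e3a e3b e4a e4b hdet with
      ⟨ha, hb, hc, hd⟩ | ⟨ha, hb, hc, hd⟩
    · exact Or.inl ⟨by funext i; fin_cases i <;> simp [ha, hb],
        by funext i; fin_cases i <;> simp [hc, hd]⟩
    · exact Or.inr ⟨by funext i; fin_cases i <;> simp [ha, hb],
        by funext i; fin_cases i <;> simp [hc, hd]⟩
  · rintro (⟨hA, hB⟩ | ⟨hA, hB⟩) <;> intro u v
    · have hid : ∀ w : Fin 2 → F, f w = w := by
        intro w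
        have hw : w = w 0 • ![1,0] + w 1 • ![0,1] := by
          funext i; fin_cases i <;> simp
        have : f (w 0 • ![1,0] + w 1 • ![0,1]) = w 0 • ![1,0] + w 1 • ![0,1] := by
          rw [map_add, map_smul, map_smul, hA, hB]
        rw [← hw] at this
        exact this
      rw [hid, hid, hid]
    · have hfw : ∀ w : Fin 2 → F, f w = ![w 0, w 0 * (1 + β2) + w 1] := by
        intro w
        have hw : w = w 0 • ![1,0] + w 1 • ![0,1] := by
          funext i; fin_cases i <;> simp
        have h1 : f (w 0 • ![1,0] + w 1 • ![0,1]) = w 0 • ![(1:F), 1+β2] + w 1 • ![(0:F),1] := by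
          rw [map_add, map_smul, map_smul, hA, hB]
        rw [← hw] at h1
        rw [h1]
        funext i; fin_cases i <;> simp
      rw [hfw, hfw, hfw]
      funext i; fin_cases i <;> simp [mul2]
      · linear_combination (-(u 0 * v 0 * (1+β2))) * h2
      · linear_combination (-(u 0 * v 0 * (1+β2) * (1+β2-α1))) * h2
end

section
/- Let F be a field with char F = 2, and let A be the 2-dimensional algebra with products e1·e1 = e1, e1·e2 = e1 + e2 (using −1 = 1), e2·e1 = e1 + e2, e2·e2 = e2 (structure constant matrix ((1,1,1,0),(0,−1,−1,−1))). Then the automorphism group of A consists of exactly the six invertible matrices over F with entries in {0,1}: I, [[0,1],[1,0]], [[0,1],[1,1]], [[1,0],[1,1]], [[1,1],[1,0]], [[1,1],[0,1]]; in particular Aut(A) is isomorphic to the symmetric group S3. -/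
section Aux

variable {F : Type*} [Field F]

lemma aux_basis_decomp (x : Fin 2 → F) : x = x 0 • ![(1:F),0] + x 1 • ![(0:F),1] := by
  funext i; fin_cases i <;> simp

lemma aux_mul2_expand (p11 p12 p21 p22 x y u v : Fin 2 → F) :
    mul2 p11 p12 p21 p22 (u 0 • x + u 1 • y) (v 0 • x + v 1 • y) =
      (u 0 * v 0) • mul2 p11 p12 p21 p22 x x + (u 0 * v 1) • mul2 p11 p12 p21 p22 x y +
      (u 1 * v 0) • mul2 p11 p12 p21 p22 y x + (u 1 * v 1) • mul2 p11 p12 p21 p22 y y := by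
  funext i
  simp [mul2, Pi.add_apply, Pi.smul_apply, smul_eq_mul]
  ring

lemma aux_reduce (p11 p12 p21 p22 : Fin 2 → F) (f : (Fin 2 → F) ≃ₗ[F] (Fin 2 → F))
    (h11 : f (mul2 p11 p12 p21 p22 ![1,0] ![1,0]) = mul2 p11 p12 p21 p22 (f ![1,0]) (f ![1,0]))
    (h12 : f (mul2 p11 p12 p21 p22 ![1,0] ![0,1]) = mul2 p11 p12 p21 p22 (f ![1,0]) (f ![0,1]))
    (h21 : f (mul2 p11 p12 p21 p22 ![0,1] ![1,0]) = mul2 p11 p12 p21 p22 (f ![0,1]) (f ![1,0]))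
    (h22 : f (mul2 p11 p12 p21 p22 ![0,1] ![0,1]) = mul2 p11 p12 p21 p22 (f ![0,1]) (f ![0,1]))
    (u v : Fin 2 → F) :
    f (mul2 p11 p12 p21 p22 u v) = mul2 p11 p12 p21 p22 (f u) (f v) := by
  have hu := aux_basis_decomp u
  have hv := aux_basis_decomp v
  have hfu : f u = (u 0) • f ![1,0] + (u 1) • f ![0,1] := by
    conv_lhs => rw [hu]
    rw [map_add, map_smul, map_smul]
  have hfv : f v = (v 0) • f ![1,0] + (v 1) • f ![0,1] := by
    conv_lhs => rw [hv]
    rw [map_add, map_smul, map_smul]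
  conv_lhs => rw [hu, hv]
  rw [aux_mul2_expand, map_add, map_add, map_add, map_smul, map_smul, map_smul, map_smul,
    h11, h12, h21, h22, hfu, hfv, aux_mul2_expand]

lemma aux_ext2 {x : Fin 2 → F} {p q : F} (h0 : x 0 = p) (h1 : x 1 = q) : x = ![p,q] := by
  funext i; fin_cases i <;> simpa using ‹_›

lemma aux_idem {a : F} (h : a * a = a) : a = 0 ∨ a = 1 := by
  rcases mul_eq_zero.1 (show a * (a - 1) = 0 by ring_nf; linear_combination h) with h' | h'
  · exact Or.inl h'
  · exact Or.inr (by linear_combination h')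

lemma aux_ne00 (f : (Fin 2 → F) ≃ₗ[F] (Fin 2 → F)) (v : Fin 2 → F) (hv : v ≠ 0)
    (h0 : f v 0 = 0) (h1 : f v 1 = 0) : False := by
  apply hv
  apply f.injective
  rw [map_zero]
  funext i; fin_cases i <;> simpa using ‹_›

lemma aux_neq (f : (Fin 2 → F) ≃ₗ[F] (Fin 2 → F)) (h : f ![1,0] = f ![0,1]) : False := by
  have h' := congrFun (f.injective h) 0
  simp at h'

end Aux

theorem stmt10 {F : Type*} [Field F] [CharP F 2]
    (mul : (Fin 2 → F) → (Fin 2 → F) → (Fin 2 → F))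
    (hmul : mul = mul2 ![1, 0] ![1, -1] ![1, -1] ![0, -1]) :
    ∀ f : (Fin 2 → F) ≃ₗ[F] (Fin 2 → F), (∀ u v, f (mul u v) = mul (f u) (f v)) ↔
      ((f ![1, 0] = ![1, 0] ∧ f ![0, 1] = ![0, 1]) ∨
       (f ![1, 0] = ![0, 1] ∧ f ![0, 1] = ![1, 0]) ∨
       (f ![1, 0] = ![0, 1] ∧ f ![0, 1] = ![1, 1]) ∨
       (f ![1, 0] = ![1, 1] ∧ f ![0, 1] = ![0, 1]) ∨
       (f ![1, 0] = ![1, 1] ∧ f ![0, 1] = ![1, 0]) ∨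
       (f ![1, 0] = ![1, 0] ∧ f ![0, 1] = ![1, 1])) := by
  have h2 : (2:F) = 0 := by exact_mod_cast CharP.cast_eq_zero F 2
  have m11 : mul2 ![1,0] ![1,-1] ![1,-1] ![0,-1] ![(1:F),0] ![1,0] = ![(1:F),0] := by
    funext i; fin_cases i <;> simp [mul2]
  have m12 : mul2 ![1,0] ![1,-1] ![1,-1] ![0,-1] ![(1:F),0] ![0,1] = ![(1:F),-1] := by
    funext i; fin_cases i <;> simp [mul2]
  have m21 : mul2 ![1,0] ![1,-1] ![1,-1] ![0,-1] ![(0:F),1] ![1,0] = ![(1:F),-1] := by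
    funext i; fin_cases i <;> simp [mul2]
  have m22 : mul2 ![1,0] ![1,-1] ![1,-1] ![0,-1] ![(0:F),1] ![0,1] = -![(0:F),1] := by
    funext i; fin_cases i <;> simp [mul2]
  have hsub : (![(1:F),-1]) = ![(1:F),0] - ![(0:F),1] := by
    funext i; fin_cases i <;> simp
  have e1ne : (![(1:F),0]) ≠ 0 := by
    intro hh; have := congrFun hh 0; simp at this
  have e2ne : (![(0:F),1]) ≠ 0 := by
    intro hh; have := congrFun hh 1; simp at this
  intro f
  constructor
  · intro h
    have hx := h ![1,0] ![1,0]; rw [hmul, m11] at hx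
    have hy := h ![0,1] ![0,1]; rw [hmul, m22, map_neg] at hy
    have hx0 := congrFun hx 0
    have hx1 := congrFun hx 1
    have hy0 := congrFun hy 0
    have hy1 := congrFun hy 1
    simp [mul2] at hx0 hx1 hy0 hy1
    set a := f ![1,0] 0
    set b := f ![1,0] 1
    set c := f ![0,1] 0
    set d := f ![0,1] 1
    have ha : a * a = a := by linear_combination -hx0 - (a*b)*h2
    have hb : b * b = b := by linear_combination hx1 + (-b - a*b)*h2
    have hc : c * c = c := by linear_combination -hy0 + (-c - c*d)*h2
    have hd : d * d = d := by linear_combination hy1 + (-c*d)*h2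
    rcases aux_idem ha with ha|ha <;> rcases aux_idem hb with hb|hb <;>
      rcases aux_idem hc with hc|hc <;> rcases aux_idem hd with hd|hd <;>
      first
      | exact (aux_ne00 f ![1,0] e1ne ha hb).elim
      | exact (aux_ne00 f ![0,1] e2ne hc hd).elim
      | exact (aux_neq f ((aux_ext2 ha hb).trans (aux_ext2 hc hd).symm)).elim
      | exact Or.inl ⟨aux_ext2 ha hb, aux_ext2 hc hd⟩
      | exact Or.inr (Or.inl ⟨aux_ext2 ha hb, aux_ext2 hc hd⟩)
      | exact Or.inr (Or.inr (Or.inl ⟨aux_ext2 ha hb, aux_ext2 hc hd⟩))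
      | exact Or.inr (Or.inr (Or.inr (Or.inl ⟨aux_ext2 ha hb, aux_ext2 hc hd⟩)))
      | exact Or.inr (Or.inr (Or.inr (Or.inr (Or.inl ⟨aux_ext2 ha hb, aux_ext2 hc hd⟩))))
      | exact Or.inr (Or.inr (Or.inr (Or.inr (Or.inr ⟨aux_ext2 ha hb, aux_ext2 hc hd⟩))))
  · intro hcase
    rcases hcase with ⟨hx,hy⟩|⟨hx,hy⟩|⟨hx,hy⟩|⟨hx,hy⟩|⟨hx,hy⟩|⟨hx,hy⟩ <;>
    · intro u v
      rw [hmul]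
      refine aux_reduce _ _ _ _ f ?_ ?_ ?_ ?_ u v
      · rw [m11, hx]
        funext i; fin_cases i <;> simp [mul2] <;>
          first
          | rfl
          | linear_combination h2
          | linear_combination -h2
          | linear_combination 2*h2
          | linear_combination -2*h2
      · rw [m12, hsub, map_sub, hx, hy]
        funext i; fin_cases i <;> simp [mul2] <;>
          first
          | rfl
          | linear_combination h2
          | linear_combination -h2
          | linear_combination 2*h2
          | linear_combination -2*h2
      · rw [m21, hsub, map_sub, hx, hy]
        funext i; fin_cases i <;> simp [mul2] <;>
          first
          | rfl
          | linear_combination h2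
          | linear_combination -h2
          | linear_combination 2*h2
          | linear_combination -2*h2
      · rw [m22, map_neg, hy]
        funext i; fin_cases i <;> simp [mul2] <;>
          first
          | rfl
          | linear_combination h2
          | linear_combination -h2
          | linear_combination 2*h2
          | linear_combination -2*h2
end

section
/- Let F be a field with char F ≠ 2, 3, and let A be the 2-dimensional algebra with products e1·e1 = α1·e1 + β1·e2, e1·e2 = α2·e1 − α1·e2, e2·e1 = (α2+1)·e1 + (1−α1)·e2, e2·e2 = α4·e1 − α2·e2 with arbitrary α1, α2, α4, β1 ∈ F. Then the only derivation of A is the zero map. -/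
theorem stmt12 {F : Type*} [Field F] (h2 : (2 : F) ≠ 0) (h3 : (3 : F) ≠ 0) (α1 α2 α4 β1 : F)
    (mul : (Fin 2 → F) → (Fin 2 → F) → (Fin 2 → F))
    (hmul : mul = mul2 ![α1, β1] ![α2, -α1] ![α2 + 1, 1 - α1] ![α4, -α2]) :
    ∀ d : (Fin 2 → F) →ₗ[F] (Fin 2 → F), (∀ u v, d (mul u v) = mul (d u) v + mul u (d v)) → d = 0 := by
  intro d hd
  set e1 : Fin 2 → F := ![1,0] with he1
  set e2 : Fin 2 → F := ![0,1] with he2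
  have key : ∀ v : Fin 2 → F, d v = v 0 • d e1 + v 1 • d e2 := by
    intro v
    have hv : v = v 0 • e1 + v 1 • e2 := by
      funext i; fin_cases i <;> simp [he1, he2]
    calc d v = d (v 0 • e1 + v 1 • e2) := by rw [← hv]
    _ = v 0 • d e1 + v 1 • d e2 := by rw [map_add, map_smul, map_smul]
  have h11 := hd e1 e1
  have h12 := hd e1 e2
  have h21 := hd e2 e1
  have h22 := hd e2 e2
  simp [hmul, mul2, he1, he2] at h11 h12 h21 h22
  rw [key ![α1, β1]] at h11
  rw [key ![α2, -α1]] at h12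
  rw [key ![α2 + 1, 1 - α1]] at h21
  rw [key ![α4, -α2]] at h22
  have E110 := congrFun h11 0
  have E111 := congrFun h11 1
  have E120 := congrFun h12 0
  have E121 := congrFun h12 1
  have E210 := congrFun h21 0
  have E211 := congrFun h21 1
  have E220 := congrFun h22 0
  have E221 := congrFun h22 1
  simp at E110 E111 E120 E121 E210 E211 E220 E221
  have hb : d e1 1 = 0 := by linear_combination -E110 - E121
  have ha : d e1 0 = 0 := by linear_combination E121 - E211 + hb
  have hk : d e2 1 = 0 := by linear_combination -E210 - E221
  have hc : d e2 0 = 0 := by linear_combination -E120 - E221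
  have hde1 : d e1 = 0 := by funext i; fin_cases i; exacts [ha, hb]
  have hde2 : d e2 = 0 := by funext i; fin_cases i; exacts [hc, hk]
  apply LinearMap.ext
  intro u
  rw [key u, hde1, hde2]
  simp
end

section
/- Let F be a field with char F ≠ 2, 3, and let A be the 2-dimensional algebra with products e1·e1 = α1·e1 + e2, e1·e2 = (2α1−1)·e2, e2·e1 = (1−α1)·e2, e2·e2 = 0, where α1 ∈ F. Then the derivations of A are exactly the maps e1 ↦ c·e2, e2 ↦ 0 for c ∈ F; in particular Der(A) is 1-dimensional and abelian. -/
/-!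
The Leibniz defect `(u, v) ↦ d (u v) - d u · v - u · d v` is bilinear, so `d` is a derivation as soon
as the Leibniz rule holds on pairs of basis vectors. Writing `d e1 = a e1 + b e2`, `d e2 = c e1 + e e2`,
the pair `(e1, e1)` gives `c = α1 a` and `e = 2 a`, and the `e2`-coordinate of the pair `(e2, e1)`
then gives `a = 0`; conversely, every map with `a = c = e = 0` is a derivation.
-/

/-- Derivations of a not necessarily associative algebra, given by its multiplication `B`
(Mathlib's `Derivation` needs a commutative algebra). -/
def LinearMap.IsDerivation {R M : Type*} [CommSemiring R] [AddCommMonoid M] [Module R M]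
    (B : M →ₗ[R] M →ₗ[R] M) (d : M →ₗ[R] M) : Prop :=
  ∀ u v, d (B u v) = B (d u) v + B u (d v)

theorem LinearMap.isDerivation_iff_basis {R M ι : Type*} [CommSemiring R] [AddCommMonoid M]
    [Module R M] (b : Module.Basis ι R M) (B : M →ₗ[R] M →ₗ[R] M) (d : M →ₗ[R] M) :
    B.IsDerivation d ↔ ∀ i j, d (B (b i) (b j)) = B (d (b i)) (b j) + B (b i) (d (b j)) := by
  refine ⟨fun h i j ↦ h _ _, fun h u v ↦ ?_⟩
  have := LinearMap.ext_basis b b (B := B.compr₂ d) (B' := B.compl₁₂ d .id + B.compl₁₂ .id d) h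
  exact congr($this u v)

section mul2

variable {F : Type*} [Field F]

def mul2ₗ (p11 p12 p21 p22 : Fin 2 → F) : (Fin 2 → F) →ₗ[F] (Fin 2 → F) →ₗ[F] (Fin 2 → F) :=
  LinearMap.mk₂ F (mul2 p11 p12 p21 p22)
    (fun _ _ _ ↦ by simp only [mul2, Pi.add_apply, add_mul, add_smul]; abel)
    (fun _ _ _ ↦ by simp only [mul2, Pi.smul_apply, smul_eq_mul, mul_assoc, smul_add, mul_smul])
    (fun _ _ _ ↦ by simp only [mul2, Pi.add_apply, mul_add, add_smul]; abel)
    (fun _ _ _ ↦ by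
      simp only [mul2, Pi.smul_apply, smul_eq_mul, mul_left_comm _ _ (_ : F), smul_add, mul_smul])

/-- The columns `![a, b]` and `![c, e]` of the matrix are the images of `e1` and `e2`. -/
theorem isDerivation_mul2ₗ_toLin'_iff (α1 a b c e : F) :
    (mul2ₗ ![α1, 1] ![0, 2 * α1 - 1] ![0, 1 - α1] ![0, 0]).IsDerivation
      (Matrix.toLin' !![a, c; b, e]) ↔ a = 0 ∧ c = 0 ∧ e = 0 := by
  rw [LinearMap.isDerivation_iff_basis (Pi.basisFun F (Fin 2))]
  simp only [mul2ₗ, Pi.basisFun_apply, LinearMap.mk₂_apply, mul2, Fin.isValue, Matrix.smul_cons,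
    smul_eq_mul, mul_one, Matrix.smul_empty, mul_zero, Matrix.add_cons, Matrix.head_cons, add_zero,
    Matrix.tail_cons, Matrix.empty_add_empty, Matrix.toLin'_apply, Matrix.mulVec_cons,
    Matrix.mulVec_empty, Matrix.mulVec_single, MulOpposite.op_one, one_smul, Matrix.col_apply,
    Matrix.of_apply, Matrix.cons_val', Matrix.cons_val_fin_one, Matrix.cons_val_zero,
    Matrix.cons_val_one, funext_iff, Pi.add_apply, Pi.smul_apply, Function.comp_apply,
    Fin.forall_fin_two, Pi.single_eq_same, ne_eq, one_ne_zero, not_false_eq_true, Pi.single_eq_of_ne,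
    zero_mul, zero_ne_one, zero_add, one_mul, true_and]
  constructor
  · rintro ⟨⟨⟨h11₀, h11₁⟩, -, -⟩, ⟨-, h21₁⟩, -⟩
    have ha : a = 0 := by linear_combination -h11₀ - h21₁
    exact ⟨ha, by linear_combination h11₀ + α1 * ha, by linear_combination h11₁ + 2 * ha⟩
  · rintro ⟨rfl, rfl, rfl⟩
    simp only [mul_zero, zero_mul, zero_add, add_zero, true_and, and_true]
    ring

end mul2

theorem stmt14_general {F : Type*} [Field F] (α1 : F)
    (mul : (Fin 2 → F) → (Fin 2 → F) → (Fin 2 → F))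
    (hmul : mul = mul2 ![α1, 1] ![0, 2 * α1 - 1] ![0, 1 - α1] ![0, 0]) :
    ∀ d : (Fin 2 → F) →ₗ[F] (Fin 2 → F), (∀ u v, d (mul u v) = mul (d u) v + mul u (d v)) ↔ (∃ c : F, d ![1, 0] = ![0, c] ∧ d ![0, 1] = 0) := by
  subst hmul
  intro d
  obtain ⟨a, b, c, e, rfl⟩ : ∃ a b c e : F, d = Matrix.toLin' !![a, c; b, e] :=
    ⟨_, _, _, _, by rw [← Matrix.eta_fin_two (LinearMap.toMatrix' d), Matrix.toLin'_toMatrix']⟩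
  change (mul2ₗ _ _ _ _).IsDerivation _ ↔ _
  rw [isDerivation_mul2ₗ_toLin'_iff]
  simp [funext_iff]

theorem stmt14 {F : Type*} [Field F] (h2 : (2 : F) ≠ 0) (h3 : (3 : F) ≠ 0) (α1 : F)
    (mul : (Fin 2 → F) → (Fin 2 → F) → (Fin 2 → F))
    (hmul : mul = mul2 ![α1, 1] ![0, 2 * α1 - 1] ![0, 1 - α1] ![0, 0]) :
    ∀ d : (Fin 2 → F) →ₗ[F] (Fin 2 → F), (∀ u v, d (mul u v) = mul (d u) v + mul u (d v)) ↔ (∃ c : F, d ![1, 0] = ![0, c] ∧ d ![0, 1] = 0) :=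
  stmt14_general α1 mul hmul
end

section
/- Let F be a field with char F ≠ 2, 3, and let A be the 2-dimensional algebra with products e1·e1 = e2, e1·e2 = e1, e2·e1 = e1, e2·e2 = −e2. Then the only derivation of A is the zero map. -/
theorem stmt15 {F : Type*} [Field F] (h2 : (2 : F) ≠ 0) (h3 : (3 : F) ≠ 0)
    (mul : (Fin 2 → F) → (Fin 2 → F) → (Fin 2 → F))
    (hmul : mul = mul2 ![0, 1] ![1, 0] ![1, 0] ![0, -1]) :
    ∀ d : (Fin 2 → F) →ₗ[F] (Fin 2 → F), (∀ u v, d (mul u v) = mul (d u) v + mul u (d v)) → d = 0 := by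
  intro d hd
  subst hmul
  have e11 : mul2 (F := F) ![0, 1] ![1, 0] ![1, 0] ![0, -1] ![1, 0] ![1, 0] = ![0, 1] := by
    funext i; fin_cases i <;> simp [mul2]
  have e12 : mul2 (F := F) ![0, 1] ![1, 0] ![1, 0] ![0, -1] ![1, 0] ![0, 1] = ![1, 0] := by
    funext i; fin_cases i <;> simp [mul2]
  have e22 : mul2 (F := F) ![0, 1] ![1, 0] ![1, 0] ![0, -1] ![0, 1] ![0, 1] = -![0, 1] := by
    funext i; fin_cases i <;> simp [mul2]
  set a := d ![1, 0] 0 with ha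
  set b := d ![1, 0] 1 with hb
  set c := d ![0, 1] 0 with hc
  set e := d ![0, 1] 1 with he
  have h1 := hd ![1, 0] ![1, 0]
  have h2' := hd ![1, 0] ![0, 1]
  have h4 := hd ![0, 1] ![0, 1]
  rw [e11] at h1
  rw [e12] at h2'
  rw [e22, map_neg] at h4
  have q1 := congrFun h1 0
  have q2 := congrFun h1 1
  have q3 := congrFun h2' 0
  have q4 := congrFun h2' 1
  have q5 := congrFun h4 0
  have q6 := congrFun h4 1
  simp only [mul2, ← ha, ← hb, ← hc, ← he, Pi.add_apply, Pi.smul_apply, Pi.neg_apply,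
    Matrix.cons_val_zero, Matrix.cons_val_one, Matrix.head_cons, smul_eq_mul] at q1 q2 q3 q4 q5 q6
  -- q1 : c = ... , etc.
  have hez : e = 0 := by linear_combination -q3
  have haz : a = 0 := by
    have : 2 * a = 0 := by linear_combination hez - q2
    exact (mul_eq_zero.1 this).resolve_left h2
  have hcz : c = 0 := by
    have : 3 * c = 0 := by linear_combination -q5
    exact (mul_eq_zero.1 this).resolve_left h3
  have hbz : b = 0 := by
    have : 2 * b = 0 := by linear_combination hcz - q1
    exact (mul_eq_zero.1 this).resolve_left h2
  have hd1 : d ![1, 0] = 0 := by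
    funext i; fin_cases i
    · exact haz
    · exact hbz
  have hd2 : d ![0, 1] = 0 := by
    funext i; fin_cases i
    · exact hcz
    · exact hez
  apply LinearMap.ext
  intro u
  have hu : u = u 0 • ![1, 0] + u 1 • ![0, 1] := by
    funext j; fin_cases j <;> simp
  rw [hu, map_add, map_smul, map_smul, hd1, hd2]
  simp
end

section
/- Let F be a field with char F = 3, and let A be the 2-dimensional algebra with products e1·e1 = e2, e1·e2 = e1, e2·e1 = e1, e2·e2 = −e2. Then, in the basis (e1,e2), Der(A) = { [[0, 2c],[c, 0]] : c ∈ F }, i.e. the derivations of A are exactly the maps d with d(e1) = c·e2 and d(e2) = 2c·e1 for c ∈ F. In particular Der(A) is 1-dimensional. -/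
theorem stmt17 {F : Type*} [Field F] [CharP F 3]
    (mul : (Fin 2 → F) → (Fin 2 → F) → (Fin 2 → F))
    (hmul : mul = mul2 ![0, 1] ![1, 0] ![1, 0] ![0, -1]) :
    ∀ d : (Fin 2 → F) →ₗ[F] (Fin 2 → F), (∀ u v, d (mul u v) = mul (d u) v + mul u (d v)) ↔ (∃ c : F, d ![1, 0] = ![0, c] ∧ d ![0, 1] = ![2 * c, 0]) := by
  have h3 : (3 : F) = 0 := by exact_mod_cast CharP.cast_eq_zero F 3
  intro d
  constructor
  · intro hd
    set a := d ![(1:F),0] 0 with ha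
    set c := d ![(1:F),0] 1 with hc
    set b := d ![(0:F),1] 0 with hb
    set e := d ![(0:F),1] 1 with he
    have hde1 : d ![(1:F),0] = ![a, c] := by
      funext i; fin_cases i <;> simp [ha, hc]
    have hde2 : d ![(0:F),1] = ![b, e] := by
      funext i; fin_cases i <;> simp [hb, he]
    have h11 := hd ![(1:F),0] ![(1:F),0]
    have h12 := hd ![(1:F),0] ![(0:F),1]
    rw [hmul] at h11 h12
    have m11 : mul2 ![(0:F),1] ![1,0] ![1,0] ![0,-1] ![(1:F),0] ![(1:F),0] = ![0,1] := by
      funext i; fin_cases i <;> simp [mul2]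
    have m12 : mul2 ![(0:F),1] ![1,0] ![1,0] ![0,-1] ![(1:F),0] ![(0:F),1] = ![1,0] := by
      funext i; fin_cases i <;> simp [mul2]
    rw [m11, hde1] at h11
    rw [m12, hde1, hde2] at h12
    -- extract component equations
    have e110 := congrFun h11 0
    have e111 := congrFun h11 1
    have e120 := congrFun h12 0
    have e121 := congrFun h12 1
    simp [mul2] at e110 e111 e120 e121
    -- e110 : b = 2c form, etc.
    refine ⟨c, ?_, ?_⟩
    · rw [hde1]
      rw [← he] at e111
      have ha0 : a = 0 := by linear_combination e111 - e120 + a * h3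
      funext i; fin_cases i <;> simp [ha0]
    · rw [hde2]
      have he0 : e = 0 := by linear_combination e120
      have hb0 : b = 2 * c := by linear_combination e110
      funext i; fin_cases i <;> simp [he0, hb0]
  · rintro ⟨c, h1, h2⟩
    intro u v
    have hu := decomp2 u
    have hv := decomp2 v
    have du : d u = u 0 • ![0, c] + u 1 • ![2*c, 0] := by
      conv_lhs => rw [hu]
      rw [map_add, map_smul, map_smul, h1, h2]
    have dv : d v = v 0 • ![0, c] + v 1 • ![2*c, 0] := by
      conv_lhs => rw [hv]
      rw [map_add, map_smul, map_smul, h1, h2]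
    have dm : d (mul u v) = (mul u v) 0 • ![0, c] + (mul u v) 1 • ![2*c, 0] := by
      conv_lhs => rw [decomp2 (mul u v)]
      rw [map_add, map_smul, map_smul, h1, h2]
    rw [dm, du, dv, hmul]
    funext i; fin_cases i
    · simp [mul2]
      linear_combination (-2 * c * u 1 * v 1) * h3
    · simp [mul2]
      ring
end
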